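/- Let $\alpha > 1$ and let $E(t;\alpha)$ be the series solution $E(t;\alpha) = e^{-t}\left(1 + \sum_{k=1}^{\infty} \frac{2^k e^{(1-\alpha^k)t}}{(1-\alpha)\cdots(1-\alpha^k)}\right)$. Then $E(0;\alpha) = \prod_{k=1}^{\infty}\left(1 - \frac{2}{\alpha^k}\right)$. -/

import Mathlib

/-!
The series `G(x) = ∑ₖ xᵏ / ((1 - α) ⋯ (1 - αᵏ))` (`eulerSeries α`) is entire when
`1 < ‖α‖`. Comparing coefficients gives `G(x) = (1 - x/α) G(x/α)`, hence
`G(c) = (1 - c/α) ⋯ (1 - c/αⁿ) · G(c/αⁿ)`, and `G(c/αⁿ) → G(0) = 1` by dominated convergence.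
So `∏ₖ (1 - c/αᵏ) = G(c)`, which is Euler's identity with `q = 1/α`; at `t = 0` the series
solution is `G(2)`.
-/

open Finset Filter Topology

section EulerIdentity

variable {𝕜 : Type*} [NormedField 𝕜]

noncomputable def eulerSeries (α x : 𝕜) : 𝕜 :=
  ∑' k, x ^ k / ∏ i ∈ range k, (1 - α ^ (i + 1))

lemma pow_div_prod_succ (α x : 𝕜) (k : ℕ) :
    x ^ (k + 1) / ∏ i ∈ range (k + 1), (1 - α ^ (i + 1))
      = (x ^ k / ∏ i ∈ range k, (1 - α ^ (i + 1))) * (x / (1 - α ^ (k + 1))) := by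
  rw [prod_range_succ, pow_succ, mul_div_mul_comm]

variable {α : 𝕜}

lemma norm_pow_sub_one_le (n : ℕ) : ‖α‖ ^ n - 1 ≤ ‖1 - α ^ n‖ := by
  simpa [norm_sub_rev] using norm_sub_norm_le (α ^ n) 1

lemma one_sub_pow_ne_zero (hα : 1 < ‖α‖) {n : ℕ} (hn : n ≠ 0) : 1 - α ^ n ≠ 0 := by
  rw [← norm_pos_iff]
  linarith [norm_pow_sub_one_le (α := α) n, one_lt_pow₀ hα hn]

lemma summable_norm_pow_div_prod (hα : 1 < ‖α‖) (x : 𝕜) :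
    Summable fun k => ‖x ^ k / ∏ i ∈ range k, (1 - α ^ (i + 1))‖ := by
  refine summable_of_ratio_norm_eventually_le (r := 1 / 2) (by norm_num) ?_
  filter_upwards [(tendsto_pow_atTop_atTop_of_one_lt hα).eventually_ge_atTop (2 * ‖x‖ + 1)]
    with k hk
  have hpow : ‖α‖ ^ k ≤ ‖α‖ ^ (k + 1) := pow_le_pow_right₀ hα.le k.le_succ
  have hden : 2 * ‖x‖ ≤ ‖1 - α ^ (k + 1)‖ := by
    linarith [norm_pow_sub_one_le (α := α) (k + 1)]
  rw [pow_div_prod_succ, norm_norm, norm_norm, norm_mul, mul_comm]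
  gcongr
  rw [norm_div, div_le_iff₀ (norm_pos_iff.2 (one_sub_pow_ne_zero hα k.succ_ne_zero))]
  linarith

lemma pow_succ_div_prod_succ (hα : 1 < ‖α‖) (x : 𝕜) (k : ℕ) :
    x ^ (k + 1) / ∏ i ∈ range (k + 1), (1 - α ^ (i + 1))
      = (x / α) ^ (k + 1) / ∏ i ∈ range (k + 1), (1 - α ^ (i + 1))
        - x / α * ((x / α) ^ k / ∏ i ∈ range k, (1 - α ^ (i + 1))) := by
  have hαk : α ^ (k + 1) ≠ 0 := pow_ne_zero _ (norm_pos_iff.1 (one_pos.trans hα))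
  have hk : 1 - α ^ (k + 1) ≠ 0 := one_sub_pow_ne_zero hα k.succ_ne_zero
  have hP : ∏ i ∈ range k, (1 - α ^ (i + 1)) ≠ 0 :=
    prod_ne_zero_iff.2 fun i _ => one_sub_pow_ne_zero hα i.succ_ne_zero
  rw [prod_range_succ, ← mul_div_assoc, ← pow_succ', div_pow]
  field_simp
  ring

variable [CompleteSpace 𝕜]

lemma summable_pow_div_prod (hα : 1 < ‖α‖) (x : 𝕜) :
    Summable fun k => x ^ k / ∏ i ∈ range k, (1 - α ^ (i + 1)) :=
  (summable_norm_pow_div_prod hα x).of_norm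

lemma eulerSeries_eq_one_add (hα : 1 < ‖α‖) (x : 𝕜) :
    eulerSeries α x = 1 + ∑' k, x ^ (k + 1) / ∏ i ∈ range (k + 1), (1 - α ^ (i + 1)) := by
  rw [eulerSeries, (summable_pow_div_prod hα x).tsum_eq_zero_add]
  simp

lemma eulerSeries_eq_one_sub_mul (hα : 1 < ‖α‖) (x : 𝕜) :
    eulerSeries α x = (1 - x / α) * eulerSeries α (x / α) := by
  have hy := summable_pow_div_prod hα (x / α)
  rw [eulerSeries_eq_one_add hα x, tsum_congr (pow_succ_div_prod_succ hα x),
    ((summable_nat_add_iff 1).2 hy).tsum_sub (hy.mul_left _), tsum_mul_left,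
    ← eulerSeries, eulerSeries_eq_one_add hα (x / α)]
  ring

lemma eulerSeries_eq_prod_mul (hα : 1 < ‖α‖) (c : 𝕜) (n : ℕ) :
    eulerSeries α c = (∏ j ∈ range n, (1 - c / α ^ (j + 1))) * eulerSeries α (c / α ^ n) := by
  induction n with
  | zero => simp
  | succ n ih =>
    rw [ih, eulerSeries_eq_one_sub_mul hα, div_div, ← pow_succ, prod_range_succ, mul_assoc]

lemma tendsto_eulerSeries_nhds_zero (hα : 1 < ‖α‖) :
    Tendsto (eulerSeries α) (𝓝 0) (𝓝 1) := by
  have hlim : Tendsto (eulerSeries α) (𝓝 0) (𝓝 (eulerSeries α 0)) := by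
    refine tendsto_tsum_of_dominated_convergence (summable_norm_pow_div_prod hα 1)
      (fun k => ((continuous_pow k).div_const _).tendsto 0) ?_
    filter_upwards [Metric.closedBall_mem_nhds (0 : 𝕜) one_pos] with x hx k
    rw [mem_closedBall_zero_iff] at hx
    simp only [norm_div, norm_pow, one_pow, norm_one]
    gcongr
    exact pow_le_one₀ (norm_nonneg x) hx
  simpa [eulerSeries_eq_one_add hα] using hlim

lemma multipliable_one_sub_div_pow (hα : 1 < ‖α‖) (c : 𝕜) :
    Multipliable fun j => 1 - c / α ^ (j + 1) := by
  have hq : ‖α⁻¹‖ < 1 := by rw [norm_inv]; exact inv_lt_one_of_one_lt₀ hα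
  have hgeom := (summable_geometric_of_lt_one (norm_nonneg _) hq).mul_left (‖c‖ * ‖α⁻¹‖)
  simp_rw [sub_eq_add_neg]
  refine multipliable_one_add_of_summable (hgeom.congr fun j => ?_)
  simp [div_eq_mul_inv, pow_succ, mul_assoc]

theorem tprod_one_sub_div_pow (hα : 1 < ‖α‖) (c : 𝕜) :
    ∏' j, (1 - c / α ^ (j + 1)) = eulerSeries α c := by
  have hq : ‖α⁻¹‖ < 1 := by rw [norm_inv]; exact inv_lt_one_of_one_lt₀ hα
  have hc : Tendsto (fun n => c / α ^ n) atTop (𝓝 0) := by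
    simpa [div_eq_mul_inv] using (tendsto_pow_atTop_nhds_zero_of_norm_lt_one hq).const_mul c
  have hprod := (multipliable_one_sub_div_pow hα c).tendsto_prod_tprod_nat.mul
    ((tendsto_eulerSeries_nhds_zero hα).comp hc)
  rw [mul_one] at hprod
  exact tendsto_nhds_unique hprod
    (tendsto_const_nhds.congr fun n => eulerSeries_eq_prod_mul hα c n)

end EulerIdentity

/-- For `α > 1`, the series solution satisfies `E(0;α) = ∏_{k≥1} (1 - 2/α^k)`. -/
theorem series_solution_at_zero (α : ℝ) (hα : 1 < α)
    (E : ℝ → ℝ)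
    (hE : ∀ t : ℝ, E t = Real.exp (-t) *
      (1 + ∑' k : ℕ,
        (2 : ℝ) ^ (k + 1) * Real.exp ((1 - α ^ (k + 1)) * t) /
          ∏ i ∈ Finset.range (k + 1), (1 - α ^ (i + 1)))) :
    E 0 = ∏' k : ℕ, (1 - 2 / α ^ (k + 1)) := by
  have hα' : 1 < ‖α‖ := hα.trans_le (Real.le_norm_self α)
  rw [hE 0, tprod_one_sub_div_pow hα', eulerSeries_eq_one_add hα']
  simp
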